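/- For every integer D ≥ 2, all integers n, m ≥ 1, and all natural numbers p_1, …, p_D, the convolution identity ∑_{k_1=0}^{p_1} ⋯ ∑_{k_D=0}^{p_D} C^{n}_{k_1…k_D} · C^{m}_{p_1−k_1, …, p_D−k_D} = C^{n+m}_{p_1…p_D} holds. -/
import Mathlib


/-- The rational number `Cⁿ_{p₁…p_D} = (n/(p₁+⋯+p_D+n)) · ∏_j binom(p₁+⋯+p_D+n, p_j)`
(for `n ≥ 1`). -/
def Ccoef (D n : ℕ) (p : Fin D → ℕ) : ℚ :=
  (n : ℚ) / ((∑ i, p i : ℕ) + n) * ∏ j, ((∑ i, p i + n).choose (p j) : ℚ)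

lemma powerset_weight_sum {ι : Type*} [DecidableEq ι] (s : Finset ι) (r : ι → ℚ) :
    ∀ M : ℚ, ∑ T ∈ s.powerset, (M + T.card) * ∏ j ∈ T, r j
      = M * ∏ j ∈ s, (1 + r j) + ∑ i ∈ s, r i * ∏ j ∈ s.erase i, (1 + r j) := by
  induction s using Finset.induction_on with
  | empty => intro M; simp
  | @insert a s ha ih =>
      intro M
      rw [Finset.powerset_insert, Finset.sum_union, Finset.sum_image]
      · have h2 : ∑ T ∈ s.powerset, ((M + (insert a T).card : ℚ)) * ∏ j ∈ insert a T, r j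
            = r a * ∑ T ∈ s.powerset, ((M + 1) + T.card) * ∏ j ∈ T, r j := by
          rw [Finset.mul_sum]
          refine Finset.sum_congr rfl fun T hT => ?_
          have haT : a ∉ T := fun h => ha (Finset.mem_powerset.mp hT h)
          rw [Finset.card_insert_of_notMem haT, Finset.prod_insert haT]
          push_cast
          ring
        rw [h2, ih, ih]
        rw [Finset.prod_insert ha, Finset.sum_insert ha, Finset.erase_insert ha]
        have h3 : ∀ i ∈ s, r i * ∏ j ∈ (insert a s).erase i, (1 + r j)
            = (1 + r a) * (r i * ∏ j ∈ s.erase i, (1 + r j)) := by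
          intro i hi
          have hia : i ≠ a := fun h => ha (h ▸ hi)
          rw [Finset.erase_insert_of_ne hia.symm, Finset.prod_insert (fun h => ha (Finset.mem_of_mem_erase h))]
          ring
        rw [Finset.sum_congr rfl h3, ← Finset.mul_sum]
        ring
      · intro T hT U hU h
        have haT : a ∉ T := fun hh => ha (Finset.mem_powerset.mp hT hh)
        have haU : a ∉ U := fun hh => ha (Finset.mem_powerset.mp hU hh)
        ext x
        constructor <;> intro hx
        · have : x ∈ insert a U := h ▸ Finset.mem_insert_of_mem hx
          rcases Finset.mem_insert.mp this with h1 | h1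
          · exact absurd (h1 ▸ hx) haT
          · exact h1
        · have : x ∈ insert a T := h ▸ Finset.mem_insert_of_mem hx
          rcases Finset.mem_insert.mp this with h1 | h1
          · exact absurd (h1 ▸ hx) haU
          · exact h1
      · rw [Finset.disjoint_right]
        intro T hT
        obtain ⟨U, hU, rfl⟩ := Finset.mem_image.mp hT
        intro hmem
        exact ha (Finset.mem_powerset.mp hmem (Finset.mem_insert_self a U))

lemma Ccoef_rec (D : ℕ) (hD : 1 ≤ D) (M : ℕ) (p : Fin D → ℕ) (h : 1 ≤ M + ∑ i, p i) :
    Ccoef D (M + 1) p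
      = ∑ T ∈ (Finset.univ.filter fun j => p j ≠ 0).powerset,
          Ccoef D (M + T.card) (fun j => p j - if j ∈ T then 1 else 0) := by
  classical
  set S := ∑ i, p i with hS
  set N := S + M with hN
  have hN1 : 1 ≤ N := by omega
  have hpN : ∀ j, p j ≤ N := fun j =>
    le_trans (Finset.single_le_sum (fun i _ => Nat.zero_le _) (Finset.mem_univ j)) (by omega)
  set d : Fin D → ℚ := fun j => ((N + 1 - p j : ℕ) : ℚ)⁻¹ with hd
  have hdne : ∀ j, ((N + 1 - p j : ℕ) : ℚ) ≠ 0 := fun j =>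
    Nat.cast_ne_zero.mpr (by have := hpN j; omega)
  have hNne : ((N : ℚ)) ≠ 0 := Nat.cast_ne_zero.mpr (by omega)
  have hN1ne : ((N : ℚ) + 1) ≠ 0 := by positivity
  -- per-term rewrite
  have hterm : ∀ T ∈ (Finset.univ.filter fun j => p j ≠ 0).powerset,
      Ccoef D (M + T.card) (fun j => p j - if j ∈ T then 1 else 0)
        = ((M : ℚ) + T.card) * (∏ j ∈ T, ((p j : ℚ) * d j))
            * ((∏ j, (N.choose (p j) : ℚ)) / N) := by
    intro T hT
    have hTsub : ∀ j ∈ T, p j ≠ 0 := fun j hj =>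
      (Finset.mem_filter.mp (Finset.mem_powerset.mp hT hj)).2
    have hcard : T.card ≤ S := by
      calc T.card = ∑ j ∈ T, 1 := by simp
        _ ≤ ∑ j ∈ T, p j := Finset.sum_le_sum (fun j hj => Nat.one_le_iff_ne_zero.mpr (hTsub j hj))
        _ ≤ S := Finset.sum_le_sum_of_subset (Finset.subset_univ T)
    have hsum : ∑ i, (p i - if i ∈ T then 1 else 0) = S - T.card := by
      rw [Finset.sum_tsub_distrib Finset.univ (f := p) (g := fun i => if i ∈ T then 1 else 0)
        (fun i _ => by
          by_cases hi : i ∈ T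
          · simpa [hi] using Nat.one_le_iff_ne_zero.mpr (hTsub i hi)
          · simp [hi])]
      congr 1
      simp
    have htop : S - T.card + (M + T.card) = N := by omega
    have hfac : ∀ j, ((N.choose (p j - if j ∈ T then 1 else 0)) : ℚ)
        = (N.choose (p j) : ℚ) * (if j ∈ T then (p j : ℚ) * d j else 1) := by
      intro j
      by_cases hj : j ∈ T
      · simp only [hj, if_true]
        have hp1 : 1 ≤ p j := Nat.one_le_iff_ne_zero.mpr (hTsub j hj)
        have key : N.choose (p j) * (p j) = N.choose (p j - 1) * (N + 1 - p j) := by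
          have := Nat.choose_succ_right_eq N (p j - 1)
          have h1 : p j - 1 + 1 = p j := by omega
          have h2 : N - (p j - 1) = N + 1 - p j := by omega
          rw [h1, h2] at this
          exact this
        have keyQ : (N.choose (p j) : ℚ) * (p j) = (N.choose (p j - 1) : ℚ) * ((N + 1 - p j : ℕ) : ℚ) := by
          exact_mod_cast congrArg (Nat.cast : ℕ → ℚ) key
        rw [hd]
        field_simp [hdne j]
        linear_combination -keyQ
      · simp [hj]
    unfold Ccoef
    rw [hsum, htop]
    have hden : ((S - T.card : ℕ) : ℚ) + ((M + T.card : ℕ) : ℚ) = (N : ℚ) := by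
      rw [Nat.cast_sub hcard]; push_cast; rw [hN]; push_cast; ring
    rw [Finset.prod_congr rfl (fun j _ => hfac j), Finset.prod_mul_distrib]
    rw [Finset.prod_ite_mem, Finset.univ_inter]
    push_cast at hden ⊢
    rw [hden]
    ring
  rw [Finset.sum_congr rfl hterm]
  rw [← Finset.sum_mul]
  -- extend to full powerset
  have hext : ∑ T ∈ (Finset.univ.filter fun j => p j ≠ 0).powerset,
        ((M : ℚ) + T.card) * ∏ j ∈ T, ((p j : ℚ) * d j)
      = ∑ T ∈ (Finset.univ : Finset (Fin D)).powerset,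
        ((M : ℚ) + T.card) * ∏ j ∈ T, ((p j : ℚ) * d j) := by
    refine Finset.sum_subset (Finset.powerset_mono.mpr (Finset.subset_univ _)) ?_
    intro T _ hTn
    have : ¬ T ⊆ Finset.univ.filter fun j => p j ≠ 0 := fun hc => hTn (Finset.mem_powerset.mpr hc)
    obtain ⟨j, hjT, hjn⟩ := Finset.not_subset.mp this
    have hpj : p j = 0 := by
      by_contra hc
      exact hjn (Finset.mem_filter.mpr ⟨Finset.mem_univ j, hc⟩)
    have : ((p j : ℚ) * d j) = 0 := by rw [hpj]; simp
    rw [Finset.prod_eq_zero hjT this, mul_zero]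
  rw [hext, powerset_weight_sum]
  -- compute products
  have h1r : ∀ j, (1 : ℚ) + (p j : ℚ) * d j = ((N : ℚ) + 1) * d j := by
    intro j
    have hc : ((N + 1 - p j : ℕ) : ℚ) = (N : ℚ) + 1 - (p j : ℚ) := by
      rw [Nat.cast_sub (by have := hpN j; omega)]; push_cast; ring
    have hm : ((N : ℚ) + 1 - (p j : ℚ)) * d j = 1 := by
      rw [hd]; simp only; rw [hc]; exact mul_inv_cancel₀ (by rw [← hc]; exact hdne j)
    have : ((N : ℚ) + 1) * d j = ((N : ℚ) + 1 - p j) * d j + (p j : ℚ) * d j := by ring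
    rw [this, hm]
  have hprod1 : ∏ j, ((1:ℚ) + (p j : ℚ) * d j) = ((N : ℚ) + 1) ^ D * ∏ j, d j := by
    rw [Finset.prod_congr rfl (fun j _ => h1r j), Finset.prod_mul_distrib, Finset.prod_const,
      Finset.card_univ, Fintype.card_fin]
  have hsum2 : ∑ i, (p i : ℚ) * d i * ∏ j ∈ Finset.univ.erase i, ((1:ℚ) + (p j : ℚ) * d j)
      = ((N : ℚ) + 1) ^ (D - 1) * (S : ℚ) * ∏ j, d j := by
    have hper : ∀ i : Fin D, (p i : ℚ) * d i * ∏ j ∈ Finset.univ.erase i, ((1:ℚ) + (p j : ℚ) * d j)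
        = (p i : ℚ) * (((N : ℚ) + 1) ^ (D - 1) * ∏ j, d j) := by
      intro i
      rw [Finset.prod_congr rfl (fun j _ => h1r j), Finset.prod_mul_distrib, Finset.prod_const,
        Finset.card_erase_of_mem (Finset.mem_univ i), Finset.card_univ, Fintype.card_fin]
      rw [← Finset.mul_prod_erase Finset.univ d (Finset.mem_univ i)]
      ring
    rw [Finset.sum_congr rfl (fun i _ => hper i), ← Finset.sum_mul]
    rw [← Nat.cast_sum]
    rw [← hS]
    ring
  rw [hprod1, hsum2]
  -- LHS
  unfold Ccoef
  have htop2 : S + (M + 1) = N + 1 := by omega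
  rw [htop2]
  have hfac2 : ∀ j, (((N+1).choose (p j)) : ℚ) = (N.choose (p j) : ℚ) * (((N:ℚ)+1) * d j) := by
    intro j
    have key := Nat.choose_mul_succ_eq N (p j)
    have keyQ : (N.choose (p j) : ℚ) * ((N : ℚ)+1) = ((N+1).choose (p j) : ℚ) * ((N + 1 - p j : ℕ) : ℚ) := by
      exact_mod_cast congrArg (Nat.cast : ℕ → ℚ) key
    rw [hd]
    field_simp [hdne j]
    linear_combination -keyQ
  rw [Finset.prod_congr rfl (fun j _ => hfac2 j), Finset.prod_mul_distrib, Finset.prod_mul_distrib,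
    Finset.prod_const, Finset.card_univ, Fintype.card_fin]
  -- final algebra
  have hpow : ((N : ℚ) + 1) ^ D = ((N : ℚ) + 1) ^ (D - 1) * ((N : ℚ) + 1) := by
    rw [← pow_succ]; congr 1; omega
  have hNc : (N : ℚ) = (S : ℚ) + (M : ℚ) := by rw [hN]; push_cast; ring
  rw [hpow]
  rw [← hS]
  rw [hNc] at hNne ⊢
  push_cast
  field_simp
  ring

lemma Ccoef_zero (D : ℕ) (k : Fin D → ℕ) : Ccoef D 0 k = 0 := by
  unfold Ccoef; simp

lemma Ccoef_expand (D : ℕ) (hD : 1 ≤ D) (n' : ℕ) (k : Fin D → ℕ) :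
    Ccoef D (n' + 1) k
      = (if n' = 0 ∧ k = 0 then 1 else 0)
        + ∑ T ∈ (Finset.univ.filter fun j => k j ≠ 0).powerset,
            Ccoef D (n' + T.card) (fun j => k j - if j ∈ T then 1 else 0) := by
  by_cases hcase : 1 ≤ n' + ∑ i, k i
  · rw [← Ccoef_rec D hD n' k hcase]
    have hne : ¬ (n' = 0 ∧ k = 0) := by
      rintro ⟨h1, h2⟩
      subst h1; subst h2
      simp at hcase
    rw [if_neg hne, zero_add]
  · push_neg at hcase
    have h1 : n' = 0 := by omega
    have hk : k = 0 := by
      funext i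
      have hz : ∑ i, k i = 0 := by omega
      exact Finset.sum_eq_zero_iff.mp hz i (Finset.mem_univ i)
    subst h1; subst hk
    have hfil : (Finset.univ.filter fun j => (0 : Fin D → ℕ) j ≠ 0) = ∅ := by simp
    rw [hfil]
    simp only [Finset.powerset_empty, Finset.sum_singleton, Finset.card_empty, Nat.add_zero]
    rw [if_pos (show True ∧ True from ⟨trivial, trivial⟩)]
    have : Ccoef D 0 (fun j => (0 : Fin D → ℕ) j - if j ∈ (∅ : Finset (Fin D)) then 1 else 0) = 0 :=
      Ccoef_zero D _
    rw [this]
    unfold Ccoef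
    simp

lemma sum_swap_shift (D : ℕ) (p : Fin D → ℕ) (G : Finset (Fin D) → (Fin D → ℕ) → ℚ) :
    ∑ k ∈ Fintype.piFinset (fun i => Finset.Iic (p i)),
      ∑ T ∈ (Finset.univ.filter fun j => k j ≠ 0).powerset, G T k
    = ∑ T ∈ (Finset.univ.filter fun j => p j ≠ 0).powerset,
        ∑ k' ∈ Fintype.piFinset (fun i => Finset.Iic (p i - if i ∈ T then 1 else 0)),
          G T (fun i => k' i + if i ∈ T then 1 else 0) := by
  rw [Finset.sum_sigma', Finset.sum_sigma']
  refine Finset.sum_nbij' (fun x => ⟨x.2, fun i => x.1 i - if i ∈ x.2 then 1 else 0⟩)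
      (fun y => ⟨fun i => y.2 i + if i ∈ y.1 then 1 else 0, y.1⟩) ?_ ?_ ?_ ?_ ?_
  · rintro ⟨k, T⟩ hx
    rw [Finset.mem_sigma] at hx ⊢
    obtain ⟨hk, hT⟩ := hx
    rw [Fintype.mem_piFinset] at hk
    have hk' : ∀ i, k i ≤ p i := fun i => Finset.mem_Iic.mp (hk i)
    have hTs : ∀ j ∈ T, k j ≠ 0 := fun j hj =>
      (Finset.mem_filter.mp (Finset.mem_powerset.mp hT hj)).2
    constructor
    · rw [Finset.mem_powerset]
      intro j hj
      rw [Finset.mem_filter]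
      refine ⟨Finset.mem_univ j, ?_⟩
      have := hTs j hj
      have := hk' j
      omega
    · rw [Fintype.mem_piFinset]
      intro i
      rw [Finset.mem_Iic]
      by_cases hi : i ∈ T
      · have := hTs i hi
        have := hk' i
        simp only [hi, if_true]
        omega
      · simp only [hi, if_false]
        have := hk' i
        omega
  · rintro ⟨T, k'⟩ hy
    rw [Finset.mem_sigma] at hy ⊢
    obtain ⟨hT, hk⟩ := hy
    rw [Fintype.mem_piFinset] at hk
    have hk' : ∀ i, k' i ≤ p i - if i ∈ T then 1 else 0 := fun i => Finset.mem_Iic.mp (hk i)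
    have hTs : ∀ j ∈ T, p j ≠ 0 := fun j hj =>
      (Finset.mem_filter.mp (Finset.mem_powerset.mp hT hj)).2
    constructor
    · rw [Fintype.mem_piFinset]
      intro i
      rw [Finset.mem_Iic]
      by_cases hi : i ∈ T
      · have := hTs i hi
        have := hk' i
        simp only [hi, if_true] at *
        omega
      · simp only [hi, if_false] at *
        have := hk' i
        omega
    · rw [Finset.mem_powerset]
      intro j hj
      rw [Finset.mem_filter]
      refine ⟨Finset.mem_univ j, ?_⟩
      simp only [hj, if_true]
      omega
  · rintro ⟨k, T⟩ hx
    rw [Finset.mem_sigma] at hx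
    obtain ⟨hk, hT⟩ := hx
    have hTs : ∀ j ∈ T, k j ≠ 0 := fun j hj =>
      (Finset.mem_filter.mp (Finset.mem_powerset.mp hT hj)).2
    simp only [Sigma.mk.inj_iff]
    constructor
    · funext i
      by_cases hi : i ∈ T
      · have := hTs i hi
        simp only [hi, if_true]
        omega
      · simp [hi]
    · rfl
  · rintro ⟨T, k'⟩ hy
    simp only [Sigma.mk.inj_iff]
    exact ⟨trivial, heq_of_eq (funext fun i => by by_cases hi : i ∈ T <;> simp [hi])⟩
  · rintro ⟨k, T⟩ hx
    rw [Finset.mem_sigma] at hx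
    obtain ⟨hk, hT⟩ := hx
    have hTs : ∀ j ∈ T, k j ≠ 0 := fun j hj =>
      (Finset.mem_filter.mp (Finset.mem_powerset.mp hT hj)).2
    simp only []
    congr 1
    funext i
    by_cases hi : i ∈ T
    · have := hTs i hi
      simp only [hi, if_true]
      omega
    · simp [hi]

lemma Ccoef_conv_aux (D : ℕ) (hD : 1 ≤ D) (m : ℕ) (hm : 1 ≤ m) :
    ∀ s : ℕ, ∀ n' : ℕ, ∀ p : Fin D → ℕ, ∑ i, p i = s →
      ∑ k ∈ Fintype.piFinset (fun i => Finset.Iic (p i)),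
        Ccoef D (n' + 1) k * Ccoef D m (fun i => p i - k i)
        = Ccoef D (n' + 1 + m) p := by
  intro s
  induction s using Nat.strong_induction_on with
  | _ s ihs =>
  intro n'
  -- common inner-sum computation, as a `have` depending on n'
  have hswap : ∀ (n' : ℕ) (p : Fin D → ℕ),
      ∑ k ∈ Fintype.piFinset (fun i => Finset.Iic (p i)),
        (∑ T ∈ (Finset.univ.filter fun j => k j ≠ 0).powerset,
          Ccoef D (n' + T.card) (fun j => k j - if j ∈ T then 1 else 0))
          * Ccoef D m (fun i => p i - k i)
      = ∑ T ∈ (Finset.univ.filter fun j => p j ≠ 0).powerset,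
          ∑ k' ∈ Fintype.piFinset (fun i => Finset.Iic (p i - if i ∈ T then 1 else 0)),
            Ccoef D (n' + T.card) k'
              * Ccoef D m (fun i => (p i - if i ∈ T then 1 else 0) - k' i) := by
    intro n' p
    have h1 : ∀ k ∈ Fintype.piFinset (fun i => Finset.Iic (p i)),
        (∑ T ∈ (Finset.univ.filter fun j => k j ≠ 0).powerset,
          Ccoef D (n' + T.card) (fun j => k j - if j ∈ T then 1 else 0))
          * Ccoef D m (fun i => p i - k i)
        = ∑ T ∈ (Finset.univ.filter fun j => k j ≠ 0).powerset,
            (fun (T : Finset (Fin D)) (k : Fin D → ℕ) =>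
              Ccoef D (n' + T.card) (fun j => k j - if j ∈ T then 1 else 0)
                * Ccoef D m (fun i => p i - k i)) T k := by
      intro k _
      rw [Finset.sum_mul]
    rw [Finset.sum_congr rfl h1, sum_swap_shift D p]
    refine Finset.sum_congr rfl fun T _ => Finset.sum_congr rfl fun k' _ => ?_
    simp only
    congr 1
    · congr 1
      funext j
      omega
    · congr 1
      funext i
      omega
  induction n' with
  | zero =>
    intro p hp
    have hexp : ∀ k ∈ Fintype.piFinset (fun i => Finset.Iic (p i)),
        Ccoef D (0 + 1) k * Ccoef D m (fun i => p i - k i)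
        = (if k = (0 : Fin D → ℕ) then Ccoef D m (fun i => p i - k i) else 0)
          + (∑ T ∈ (Finset.univ.filter fun j => k j ≠ 0).powerset,
              Ccoef D (0 + T.card) (fun j => k j - if j ∈ T then 1 else 0))
              * Ccoef D m (fun i => p i - k i) := by
      intro k _
      rw [Ccoef_expand D hD 0 k, add_mul]
      congr 1
      simp only [true_and]
      split <;> simp
    rw [Finset.sum_congr rfl hexp, Finset.sum_add_distrib]
    rw [Finset.sum_ite_eq' (Fintype.piFinset fun i => Finset.Iic (p i)) (0 : Fin D → ℕ)
      (fun k => Ccoef D m (fun i => p i - k i))]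
    rw [if_pos (by simp)]
    rw [hswap 0 p]
    -- T = ∅ inner sum is zero since Ccoef D 0 = 0
    have hz : ∀ T ∈ (Finset.univ.filter fun j => p j ≠ 0).powerset,
        (∑ k' ∈ Fintype.piFinset (fun i => Finset.Iic (p i - if i ∈ T then 1 else 0)),
          Ccoef D (0 + T.card) k'
            * Ccoef D m (fun i => (p i - if i ∈ T then 1 else 0) - k' i))
        = Ccoef D (0 + m + T.card) (fun j => p j - if j ∈ T then 1 else 0)
          - (if T = ∅ then Ccoef D (0 + m) p else 0) := by
      intro T hT
      by_cases hTe : T = ∅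
      · subst hTe
        rw [if_pos rfl]
        have : ∀ k' ∈ Fintype.piFinset (fun i => Finset.Iic (p i - if i ∈ (∅ : Finset (Fin D)) then 1 else 0)),
            Ccoef D (0 + (∅ : Finset (Fin D)).card) k'
              * Ccoef D m (fun i => (p i - if i ∈ (∅ : Finset (Fin D)) then 1 else 0) - k' i) = 0 := by
          intro k' _
          rw [show (0 + (∅ : Finset (Fin D)).card) = 0 by simp, Ccoef_zero, zero_mul]
        rw [Finset.sum_congr rfl this, Finset.sum_const_zero]
        have hpe : (fun j => p j - if j ∈ (∅ : Finset (Fin D)) then 1 else 0) = p := by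
          funext j; simp
        rw [hpe]
        simp
      · rw [if_neg hTe, sub_zero]
        have hTsub : ∀ j ∈ T, p j ≠ 0 := fun j hj =>
          (Finset.mem_filter.mp (Finset.mem_powerset.mp hT hj)).2
        have hcard1 : 1 ≤ T.card := Finset.card_pos.mpr (Finset.nonempty_of_ne_empty hTe)
        have hcards : T.card ≤ s := by
          rw [← hp]
          calc T.card = ∑ j ∈ T, 1 := by simp
            _ ≤ ∑ j ∈ T, p j := Finset.sum_le_sum (fun j hj => Nat.one_le_iff_ne_zero.mpr (hTsub j hj))
            _ ≤ ∑ i, p i := Finset.sum_le_sum_of_subset (Finset.subset_univ T)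
        have hsum : ∑ i, (p i - if i ∈ T then 1 else 0) = s - T.card := by
          rw [Finset.sum_tsub_distrib Finset.univ (f := p) (g := fun i => if i ∈ T then 1 else 0)
            (fun i _ => by
              by_cases hi : i ∈ T
              · simpa [hi] using Nat.one_le_iff_ne_zero.mpr (hTsub i hi)
              · simp [hi])]
          rw [hp]
          congr 1
          simp
        have hlt : ∑ i, (p i - if i ∈ T then 1 else 0) < s := by omega
        have h4 := ihs _ hlt (T.card - 1) (fun j => p j - if j ∈ T then 1 else 0) rfl
        rw [show T.card - 1 + 1 = T.card from by omega] at h4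
        rw [show 0 + T.card = T.card from by omega, show 0 + m + T.card = T.card + m from by omega]
        exact h4
    rw [Finset.sum_congr rfl hz, Finset.sum_sub_distrib]
    rw [Finset.sum_ite_eq' ((Finset.univ.filter fun j => p j ≠ 0).powerset) (∅ : Finset (Fin D))
      (fun _ => Ccoef D (0 + m) p)]
    rw [if_pos (Finset.empty_mem_powerset _)]
    have hp0 : (fun i => p i - (0 : Fin D → ℕ) i) = p := by funext i; simp
    rw [hp0]
    rw [show (0:ℕ) + 1 + m = 0 + m + 1 from by omega]
    rw [Ccoef_rec D hD (0 + m) p (by omega)]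
    rw [show (0:ℕ) + m = m from by omega]
    ring
  | succ n'' ihn =>
    intro p hp
    have hexp : ∀ k ∈ Fintype.piFinset (fun i => Finset.Iic (p i)),
        Ccoef D (n'' + 1 + 1) k * Ccoef D m (fun i => p i - k i)
        = (∑ T ∈ (Finset.univ.filter fun j => k j ≠ 0).powerset,
            Ccoef D (n'' + 1 + T.card) (fun j => k j - if j ∈ T then 1 else 0))
            * Ccoef D m (fun i => p i - k i) := by
      intro k _
      rw [Ccoef_expand D hD (n'' + 1) k]
      rw [if_neg (by rintro ⟨h, _⟩; omega), zero_add]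
    rw [Finset.sum_congr rfl hexp, hswap (n'' + 1) p]
    have hz : ∀ T ∈ (Finset.univ.filter fun j => p j ≠ 0).powerset,
        (∑ k' ∈ Fintype.piFinset (fun i => Finset.Iic (p i - if i ∈ T then 1 else 0)),
          Ccoef D (n'' + 1 + T.card) k'
            * Ccoef D m (fun i => (p i - if i ∈ T then 1 else 0) - k' i))
        = Ccoef D (n'' + 1 + m + T.card) (fun j => p j - if j ∈ T then 1 else 0) := by
      intro T hT
      by_cases hTe : T = ∅
      · subst hTe
        simp only [Finset.notMem_empty, if_false, Nat.sub_zero, Finset.card_empty, Nat.add_zero]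
        exact ihn p hp
      · have hTsub : ∀ j ∈ T, p j ≠ 0 := fun j hj =>
          (Finset.mem_filter.mp (Finset.mem_powerset.mp hT hj)).2
        have hcard1 : 1 ≤ T.card := Finset.card_pos.mpr (Finset.nonempty_of_ne_empty hTe)
        have hcards : T.card ≤ s := by
          rw [← hp]
          calc T.card = ∑ j ∈ T, 1 := by simp
            _ ≤ ∑ j ∈ T, p j := Finset.sum_le_sum (fun j hj => Nat.one_le_iff_ne_zero.mpr (hTsub j hj))
            _ ≤ ∑ i, p i := Finset.sum_le_sum_of_subset (Finset.subset_univ T)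
        have hsum : ∑ i, (p i - if i ∈ T then 1 else 0) = s - T.card := by
          rw [Finset.sum_tsub_distrib Finset.univ (f := p) (g := fun i => if i ∈ T then 1 else 0)
            (fun i _ => by
              by_cases hi : i ∈ T
              · simpa [hi] using Nat.one_le_iff_ne_zero.mpr (hTsub i hi)
              · simp [hi])]
          rw [hp]
          congr 1
          simp
        have hlt : ∑ i, (p i - if i ∈ T then 1 else 0) < s := by omega
        have h4 := ihs _ hlt (n'' + 1 + T.card - 1) (fun j => p j - if j ∈ T then 1 else 0) rfl
        rw [show n'' + 1 + T.card - 1 + 1 = n'' + 1 + T.card from by omega] at h4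
        rw [show n'' + 1 + m + T.card = n'' + 1 + T.card + m from by omega]
        exact h4
    rw [Finset.sum_congr rfl hz]
    rw [show n'' + 1 + 1 + m = (n'' + 1 + m) + 1 from by omega]
    rw [Ccoef_rec D hD (n'' + 1 + m) p (by omega)]

theorem Ccoef_convolution (D : ℕ) (hD : 2 ≤ D) (n m : ℕ) (hn : 1 ≤ n) (hm : 1 ≤ m)
    (p : Fin D → ℕ) :
    ∑ k ∈ Fintype.piFinset (fun i => Finset.Iic (p i)),
      Ccoef D n k * Ccoef D m (fun i => p i - k i) = Ccoef D (n + m) p := by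
  have hD1 : 1 ≤ D := by omega
  have h := Ccoef_conv_aux D hD1 m hm (∑ i, p i) (n - 1) p rfl
  rw [show n - 1 + 1 = n from by omega] at h
  exact h
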